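/- Every unit interval graph admits a conflict-free 2-coloring. That is, if V is a finite set and x : V → ℝ, then the simple graph on V in which distinct u, v are adjacent if and only if |x(u) − x(v)| ≤ 2 admits a conflict-free 2-coloring. -/

import Mathlib

/-- A conflict-free coloring of `G` with `k` colors: a partial coloring
(uncolored vertices get `none`) such that every vertex has, in its closed
neighborhood, a colored vertex whose color occurs exactly once there. -/
def IsCFColoring {V : Type*} (G : SimpleGraph V) {k : ℕ} (χ : V → Option (Fin k)) : Prop :=
  ∀ v : V, ∃ u ∈ insert v (G.neighborSet v), (χ u).isSome ∧
    ∀ w ∈ insert v (G.neighborSet v), χ w = χ u → w = u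

/-- `G` admits a conflict-free coloring with `k` colors. -/
def HasCFColoring {V : Type*} (G : SimpleGraph V) (k : ℕ) : Prop :=
  ∃ χ : V → Option (Fin k), IsCFColoring G χ

/-- The unit interval graph on points `x`: distinct vertices are adjacent iff
their points are at distance at most 2 (the closed intervals of length 2
centered at the points intersect). -/
def unitIntervalGraph {V : Type*} (x : V → ℝ) : SimpleGraph V where
  Adj u v := u ≠ v ∧ |x u - x v| ≤ 2
  symm := by
    constructor
    intro u v ⟨h1, h2⟩
    exact ⟨h1.symm, by rwa [abs_sub_comm]⟩
  loopless := by
    constructor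
    intro v ⟨h1, _⟩
    exact h1 rfl

/-!
Sweep the points from left to right: colour the leftmost vertex `m`, discard every vertex within
distance `2` of it (those are dominated by `m`), and recurse on the rest. The coloured vertices
are then pairwise more than `2` apart, and choosing the colour of `m` opposite to that of the
next coloured vertex makes equally coloured vertices more than `4` apart. A vertex `v` within
distance `2` of a coloured `u` therefore sees no other vertex of the colour of `u`.
-/

section

variable {V : Type*} (x : V → ℝ) (r : ℝ)

structure IsSpacedCover (S : Finset V) (χ : V → Option (Fin 2)) : Prop where
  support : ∀ v, (χ v).isSome → v ∈ S
  spaced : ∀ u w, (χ u).isSome → (χ w).isSome → u ≠ w → r < |x u - x w|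
  spaced_of_eq : ∀ u w, (χ u).isSome → χ w = χ u → u ≠ w → 2 * r < |x u - x w|
  cover : ∀ v ∈ S, ∃ u, (χ u).isSome ∧ |x u - x v| ≤ r

variable {x r}

lemma IsSpacedCover.exists_color_far {S : Finset V} {χ : V → Option (Fin 2)} {a : ℝ}
    (hχ : IsSpacedCover x r (S.filter (a + r < x ·)) χ) :
    ∃ c : Fin 2, ∀ w, χ w = some c → a + 2 * r < x w := by
  have hright : ∀ w, (χ w).isSome → a + r < x w := fun w hw =>
    (Finset.mem_filter.1 (hχ.support w hw)).2
  by_cases hnear : ∃ w₀ c₀, χ w₀ = some c₀ ∧ x w₀ ≤ a + 2 * r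
  · obtain ⟨w₀, c₀, hw₀, hw₀a⟩ := hnear
    refine ⟨c₀ + 1, fun w hw => ?_⟩
    have hne : w ≠ w₀ := by
      rintro rfl
      rw [hw₀, Option.some_inj] at hw
      omega
    have hsep := hχ.spaced w w₀ (by simp [hw]) (by simp [hw₀]) hne
    have := hright w (by simp [hw])
    have := hright w₀ (by simp [hw₀])
    by_contra! hwa
    exact hsep.not_ge (abs_sub_le_iff.2 ⟨by linarith, by linarith⟩)
  · push Not at hnear
    exact ⟨0, fun w hw => hnear w 0 hw⟩

lemma IsSpacedCover.update_min [DecidableEq V] (hr : 0 ≤ r) {S : Finset V} {m : V}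
    {χ : V → Option (Fin 2)} {c : Fin 2} (hmS : m ∈ S) (hmin : ∀ v ∈ S, x m ≤ x v)
    (hχ : IsSpacedCover x r (S.filter (x m + r < x ·)) χ)
    (hc : ∀ w, χ w = some c → x m + 2 * r < x w) :
    IsSpacedCover x r S (Function.update χ m (some c)) := by
  have hright : ∀ w, (χ w).isSome → x m + r < x w := fun w hw =>
    (Finset.mem_filter.1 (hχ.support w hw)).2
  refine ⟨fun v hv => ?_, fun u w hu hw huw => ?_, fun u w hu huw hne => ?_, fun v hv => ?_⟩
  · rcases eq_or_ne v m with rfl | hvm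
    · exact hmS
    · rw [Function.update_of_ne hvm] at hv
      exact (Finset.mem_filter.1 (hχ.support v hv)).1
  · rcases eq_or_ne u m with rfl | hum
    · rw [Function.update_of_ne huw.symm] at hw
      rw [abs_sub_comm, abs_of_pos] <;> linarith [hright w hw]
    rw [Function.update_of_ne hum] at hu
    rcases eq_or_ne w m with rfl | hwm
    · rw [abs_of_pos] <;> linarith [hright u hu]
    rw [Function.update_of_ne hwm] at hw
    exact hχ.spaced u w hu hw huw
  · rcases eq_or_ne u m with rfl | hum
    · rw [Function.update_self, Function.update_of_ne hne.symm] at huw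
      rw [abs_sub_comm, abs_of_pos] <;> linarith [hc w huw]
    rw [Function.update_of_ne hum] at hu huw
    rcases eq_or_ne w m with rfl | hwm
    · rw [Function.update_self] at huw
      rw [abs_of_pos] <;> linarith [hc u huw.symm]
    rw [Function.update_of_ne hwm] at huw
    exact hχ.spaced_of_eq u w hu huw hne
  · by_cases hvm : x v ≤ x m + r
    · refine ⟨m, by simp, ?_⟩
      rw [abs_sub_comm, abs_of_nonneg (by linarith [hmin v hv])]
      linarith
    · obtain ⟨u, hu, huv⟩ := hχ.cover v (Finset.mem_filter.2 ⟨hv, by linarith⟩)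
      have hum : u ≠ m := by
        rintro rfl
        linarith [hright u hu]
      exact ⟨u, by rwa [Function.update_of_ne hum], huv⟩

variable (x) in
lemma exists_isSpacedCover (hr : 0 ≤ r) (S : Finset V) : ∃ χ, IsSpacedCover x r S χ := by
  induction S using Finset.strongInduction with
  | H S ih =>
    rcases S.eq_empty_or_nonempty with rfl | hS
    · exact ⟨fun _ => none, ⟨by simp, by simp, by simp, by simp⟩⟩
    obtain ⟨m, hmS, hmin⟩ := S.exists_min_image x hS
    obtain ⟨χ, hχ⟩ :=
      ih (S.filter (x m + r < x ·)) (Finset.filter_ssubset.2 ⟨m, hmS, by simpa using hr⟩)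
    obtain ⟨c, hc⟩ := hχ.exists_color_far
    classical
    exact ⟨_, hχ.update_min hr hmS hmin hc⟩

lemma mem_closedNbhd_unitIntervalGraph {v w : V} :
    w ∈ insert v ((unitIntervalGraph x).neighborSet v) ↔ |x v - x w| ≤ 2 := by
  rcases eq_or_ne w v with rfl | hwv
  · simp
  · simp [unitIntervalGraph, hwv, hwv.symm]

lemma IsSpacedCover.isCFColoring [Fintype V] {χ : V → Option (Fin 2)}
    (hχ : IsSpacedCover x 2 Finset.univ χ) : IsCFColoring (unitIntervalGraph x) χ := by
  intro v
  obtain ⟨u, hu, huv⟩ := hχ.cover v (Finset.mem_univ v)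
  refine ⟨u, mem_closedNbhd_unitIntervalGraph.2 (by rwa [abs_sub_comm]), hu, fun w hw hwu => ?_⟩
  by_contra hne
  have := hχ.spaced_of_eq u w hu hwu (Ne.symm hne)
  rw [mem_closedNbhd_unitIntervalGraph] at hw
  linarith [abs_sub_le (x u) (x v) (x w)]

end

theorem stmt13 {V : Type*} [Fintype V] (x : V → ℝ) :
    HasCFColoring (unitIntervalGraph x) 2 := by
  obtain ⟨χ, hχ⟩ := exists_isSpacedCover x zero_le_two Finset.univ
  exact ⟨χ, hχ.isCFColoring⟩
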